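/- arXiv:1811.03177 — 5 statements merged into one kernel-verified Lean document; each statement's English description precedes it below -/
import Mathlib

section
/- Let m > n be positive integers and Q_{m,n} the (m,n)-th Turan polynomial. The leading coefficient of Q_{m,n} (the coefficient of z^(m+n)) has absolute value equal to C(m+n-1, n-1), which is at least (1 + m/(n-1))^(n-1). -/
open Polynomial

/-- `σ_m` for `(1-z)^{-n}`: the degree-`m` truncation of the power series of `(1-z)^{-n}`,
whose `i`-th coefficient is `C(n+i-1, n-1)`. -/
noncomputable def sigmaTrunc (m n : ℕ) : Polynomial ℝ :=
  ∑ i ∈ Finset.range (m + 1), Polynomial.C (((n + i - 1).choose (n - 1) : ℕ) : ℝ) * Polynomial.X ^ i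

/-- The `(m,n)`-th Turán polynomial `Q_{m,n}(z) = (1-z)^n σ_m(z)`. -/
noncomputable def turanQ (m n : ℕ) : Polynomial ℝ :=
  (1 - Polynomial.X) ^ n * sigmaTrunc m n

lemma pow_div_le_choose (k N : ℕ) (h : k ≤ N) : ((N : ℝ) / k) ^ k ≤ N.choose k := by
  induction k generalizing N with
  | zero => simp
  | succ k ih =>
    obtain ⟨M, rfl⟩ : ∃ M, N = M + 1 := ⟨N - 1, (Nat.succ_pred_eq_of_pos (by omega)).symm⟩
    have hkM : k ≤ M := by omega
    have hid : ((M + 1).choose (k + 1) : ℝ) * (k + 1) = (M + 1) * M.choose k := by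
      exact_mod_cast congrArg (Nat.cast : ℕ → ℝ) (Nat.add_one_mul_choose_eq M k).symm
    have hk1 : (0 : ℝ) < (k : ℝ) + 1 := by positivity
    have hpow : (((M : ℝ) + 1) / (k + 1)) ^ k ≤ ((M : ℝ) / k) ^ k := by
      rcases Nat.eq_zero_or_pos k with hk0 | hk0
      · simp [hk0]
      · apply pow_le_pow_left₀ (by positivity)
        rw [div_le_div_iff₀ hk1 (by exact_mod_cast hk0)]
        have : ((k : ℝ)) ≤ M := by exact_mod_cast hkM
        nlinarith
    have hIH := ih M hkM
    have hnn : (0 : ℝ) ≤ ((M : ℝ) + 1) / (k + 1) := by positivity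
    calc (((M + 1 : ℕ) : ℝ) / ((k + 1 : ℕ) : ℝ)) ^ (k + 1)
        = (((M : ℝ) + 1) / (k + 1)) * (((M : ℝ) + 1) / (k + 1)) ^ k := by
          push_cast; ring
      _ ≤ (((M : ℝ) + 1) / (k + 1)) * ((M : ℝ) / k) ^ k := by
          exact mul_le_mul_of_nonneg_left hpow hnn
      _ ≤ (((M : ℝ) + 1) / (k + 1)) * M.choose k := by
          exact mul_le_mul_of_nonneg_left hIH hnn
      _ = ((M + 1).choose (k + 1) : ℝ) := by
          field_simp at hid ⊢; linarith [hid]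

lemma sigma_coeff (m n k : ℕ) :
    (sigmaTrunc m n).coeff k =
      if k ≤ m then (((n + k - 1).choose (n - 1) : ℕ) : ℝ) else 0 := by
  simp [sigmaTrunc, Polynomial.finset_sum_coeff, Polynomial.coeff_C_mul, Polynomial.coeff_X_pow,
    Finset.sum_ite_eq', Finset.mem_range, Nat.lt_succ_iff]

lemma sigma_natDegree (m n : ℕ) (hn : 1 ≤ n) : (sigmaTrunc m n).natDegree = m := by
  apply le_antisymm
  · apply Polynomial.natDegree_le_iff_coeff_eq_zero.mpr
    intro k hk
    rw [sigma_coeff]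
    simp [Nat.not_le.mpr hk]
  · apply Polynomial.le_natDegree_of_ne_zero
    rw [sigma_coeff]
    simp only [le_refl, if_true]
    have : 0 < (n + m - 1).choose (n - 1) := Nat.choose_pos (by omega)
    positivity

lemma onesubX_lc (n : ℕ) : ((1 - X : Polynomial ℝ) ^ n).leadingCoeff = (-1) ^ n := by
  rw [Polynomial.leadingCoeff_pow]
  have : (1 - X : Polynomial ℝ) = -(X - Polynomial.C 1) := by simp only [map_one]; ring
  rw [this, Polynomial.leadingCoeff_neg, Polynomial.leadingCoeff_X_sub_C]

lemma onesubX_natDegree (n : ℕ) : ((1 - X : Polynomial ℝ) ^ n).natDegree = n := by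
  rw [Polynomial.natDegree_pow]
  have : (1 - X : Polynomial ℝ) = -(X - Polynomial.C 1) := by simp only [map_one]; ring
  rw [this, Polynomial.natDegree_neg, Polynomial.natDegree_X_sub_C, mul_one]

/-- For `m > n ≥ 2`, the leading coefficient of `Q_{m,n}` (the coefficient
of `z^{m+n}`) has absolute value `C(m+n-1, n-1)`, which is at least `(1 + m/(n-1))^{n-1}`. -/
theorem turanQ_leadingCoeff (m n : ℕ) (hn : 2 ≤ n) (hmn : n < m) :
    |(turanQ m n).coeff (m + n)| = (((m + n - 1).choose (n - 1) : ℕ) : ℝ) ∧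
    (1 + (m : ℝ) / ((n : ℝ) - 1)) ^ (n - 1) ≤ (((m + n - 1).choose (n - 1) : ℕ) : ℝ) := by
  constructor
  · have hc : (turanQ m n).coeff (m + n) = (-1) ^ n * (((n + m - 1).choose (n - 1) : ℕ) : ℝ) := by
      have h1 : m + n = ((1 - X : Polynomial ℝ) ^ n).natDegree + (sigmaTrunc m n).natDegree := by
        rw [onesubX_natDegree, sigma_natDegree m n (by omega)]; omega
      rw [turanQ, h1, Polynomial.coeff_mul_degree_add_degree, onesubX_lc]
      congr 1
      rw [Polynomial.leadingCoeff, sigma_natDegree m n (by omega), sigma_coeff]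
      simp
    rw [hc, abs_mul, abs_pow, abs_neg, abs_one, one_pow, one_mul,
      abs_of_nonneg (by positivity)]
    congr 2
    omega
  · have key := pow_div_le_choose (n - 1) (m + n - 1) (by omega)
    have he : ((m + n - 1 : ℕ) : ℝ) / ((n - 1 : ℕ) : ℝ) = 1 + (m : ℝ) / ((n : ℝ) - 1) := by
      have h1 : ((m + n - 1 : ℕ) : ℝ) = (m : ℝ) + (n : ℝ) - 1 := by
        have : (m + n - 1 : ℕ) = m + (n - 1) := by omega
        rw [this]; push_cast [Nat.cast_sub (by omega : 1 ≤ n)]; ring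
      have h2 : ((n - 1 : ℕ) : ℝ) = (n : ℝ) - 1 := by
        push_cast [Nat.cast_sub (by omega : 1 ≤ n)]; ring
      have h3 : (n : ℝ) - 1 ≠ 0 := by
        have : (2 : ℝ) ≤ n := by exact_mod_cast hn
        linarith
      rw [h1, h2]; field_simp; ring
    rw [he] at key
    exact key
end

section
/- Let V be an n-by-n Vandermonde matrix generated by distinct positive real numbers alpha_1,...,alpha_n. Then the l-infinity to l-infinity operator norm of V^{-1} equals max over i of the product over j != i of (1 + alpha_j)/|alpha_j - alpha_i|. -/
open Polynomial

section Aux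

variable {ι : Type*} [DecidableEq ι]

lemma coeff_prod_X_add_C_nonneg (s : Finset ι) (a : ι → ℝ) (ha : ∀ j ∈ s, 0 ≤ a j) (k : ℕ) :
    0 ≤ (∏ j ∈ s, (X + C (a j))).coeff k := by
  induction s using Finset.induction_on generalizing k with
  | empty => cases k <;> simp [coeff_one]
  | @insert j s hj ih =>
    rw [Finset.prod_insert hj, add_mul]
    have hq := fun k => ih (fun t ht => ha t (Finset.mem_insert_of_mem ht)) k
    have haj : 0 ≤ a j := ha j (Finset.mem_insert_self _ _)
    cases k with
    | zero =>
      rw [coeff_add, mul_coeff_zero, coeff_X_zero, zero_mul, zero_add, coeff_C_mul]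
      exact mul_nonneg haj (hq 0)
    | succ k =>
      rw [coeff_add, coeff_X_mul, coeff_C_mul]
      exact add_nonneg (hq k) (mul_nonneg haj (hq _))

lemma coeff_prod_X_sub_C_eq (s : Finset ι) (a : ι → ℝ) (k : ℕ) :
    (∏ j ∈ s, (X - C (a j))).coeff k =
      (-1) ^ (s.card + k) * (∏ j ∈ s, (X + C (a j))).coeff k := by
  induction s using Finset.induction_on generalizing k with
  | empty => cases k <;> simp [coeff_one]
  | @insert j s hj ih =>
    rw [Finset.prod_insert hj, Finset.prod_insert hj, sub_mul, add_mul,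
      Finset.card_insert_of_notMem hj]
    cases k with
    | zero =>
      simp only [coeff_sub, coeff_add, mul_coeff_zero, coeff_X_zero, zero_mul, zero_sub, zero_add,
        coeff_C_mul, ih 0]
      ring_nf
    | succ k =>
      simp only [coeff_sub, coeff_add, coeff_X_mul, coeff_C_mul, ih k, ih (k+1)]
      ring_nf

lemma abs_coeff_prod_X_sub_C (s : Finset ι) (a : ι → ℝ) (ha : ∀ j ∈ s, 0 ≤ a j) (k : ℕ) :
    |(∏ j ∈ s, (X - C (a j))).coeff k| = (∏ j ∈ s, (X + C (a j))).coeff k := by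
  rw [coeff_prod_X_sub_C_eq, abs_mul, abs_pow, abs_neg, abs_one, one_pow, one_mul,
    abs_of_nonneg (coeff_prod_X_add_C_nonneg s a ha k)]

lemma lagrange_rowsum {n : ℕ} (α : Fin n → ℝ) (hpos : ∀ i, 0 < α i) (i : Fin n) :
    ∑ k : Fin n, |(Lagrange.basis Finset.univ α i).coeff k| =
      ∏ j ∈ Finset.univ.erase i, (1 + α j) / |α j - α i| := by
  have hn : 0 < n := i.pos
  set s := Finset.univ.erase i with hs
  have hcard : s.card = n - 1 := by
    rw [hs, Finset.card_erase_of_mem (Finset.mem_univ i), Finset.card_univ, Fintype.card_fin]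
  set p : ℝ[X] := ∏ j ∈ s, (X - C (α j)) with hp
  set q : ℝ[X] := ∏ j ∈ s, (X + C (α j)) with hq
  have hbasis : Lagrange.basis Finset.univ α i = C (∏ j ∈ s, (α i - α j)⁻¹) * p := by
    rw [Lagrange.basis, map_prod, ← Finset.prod_mul_distrib]
    rfl
  have hqdeg : q.natDegree < n := by
    calc q.natDegree ≤ ∑ j ∈ s, (X + C (α j)).natDegree := natDegree_prod_le _ _
    _ = s.card := by simp [natDegree_X_add_C]
    _ < n := by omega
  have hsum : ∑ k : Fin n, |p.coeff k| = ∏ j ∈ s, (1 + α j) := by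
    rw [Fin.sum_univ_eq_sum_range fun k => |p.coeff k|]
    have habs : ∀ k, |p.coeff k| = q.coeff k :=
      abs_coeff_prod_X_sub_C s α (fun j _ => (hpos j).le)
    simp_rw [habs]
    have heval := eval_eq_sum_range' hqdeg (1 : ℝ)
    simp only [one_pow, mul_one] at heval
    rw [← heval, hq, eval_prod]
    simp [add_comm]
  have habs : ∀ k : Fin n, |(Lagrange.basis Finset.univ α i).coeff k| =
      (∏ j ∈ s, |α i - α j|⁻¹) * |p.coeff k| := by
    intro k
    rw [hbasis, coeff_C_mul, abs_mul, Finset.abs_prod]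
    simp [abs_inv]
  simp_rw [habs]
  rw [← Finset.mul_sum, hsum, ← Finset.prod_mul_distrib]
  refine Finset.prod_congr rfl fun j hj => ?_
  rw [div_eq_mul_inv, abs_sub_comm, mul_comm]

end Aux

/-- The `ℓ∞ → ℓ∞` operator norm of a real matrix: the maximum absolute row sum. -/
noncomputable def infNorm {n : ℕ} (A : Matrix (Fin n) (Fin n) ℝ) : ℝ :=
  sSup {r : ℝ | ∃ i : Fin n, r = ∑ j, |A i j|}

/-- Gautschi: For the `n × n` Vandermonde matrix `V` generated by distinct
positive reals `α_1, …, α_n` (so `V_{ij} = α_j^{i-1}`), the `ℓ∞ → ℓ∞` operator norm of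
`V⁻¹` equals `max_i ∏_{j ≠ i} (1 + α_j)/|α_j - α_i|`. -/
theorem vandermonde_inverse_infNorm_eq {n : ℕ} (hn : 0 < n)
    (α : Fin n → ℝ) (hpos : ∀ i, 0 < α i) (hinj : Function.Injective α)
    (V : Matrix (Fin n) (Fin n) ℝ) (hV : ∀ i j, V i j = α j ^ (i : ℕ)) :
    infNorm V⁻¹ =
      sSup {r : ℝ | ∃ i : Fin n,
        r = ∏ j ∈ Finset.univ.erase i, (1 + α j) / |α j - α i|} := by
  set W : Matrix (Fin n) (Fin n) ℝ := fun i j => (Lagrange.basis Finset.univ α i).coeff j with hW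
  have hdeg : ∀ i : Fin n, (Lagrange.basis Finset.univ α i).natDegree < n := by
    intro i
    rw [Lagrange.natDegree_basis (hinj.injOn) (Finset.mem_univ i)]
    simp only [Finset.card_univ, Fintype.card_fin]
    omega
  have hWV : W * V = 1 := by
    ext i k
    rw [Matrix.mul_apply]
    have heval := eval_eq_sum_range' (hdeg i) (α k)
    rw [← Fin.sum_univ_eq_sum_range (fun j => (Lagrange.basis Finset.univ α i).coeff j * α k ^ j)]
      at heval
    simp only [hW, hV, Matrix.one_apply]
    rw [← heval]
    by_cases h : i = k
    · subst h
      rw [Lagrange.eval_basis_self hinj.injOn (Finset.mem_univ i)]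
      simp
    · rw [Lagrange.eval_basis_of_ne (fun hc => h hc) (Finset.mem_univ k)]
      simp [h]
  have hVinv : V⁻¹ = W := Matrix.inv_eq_left_inv hWV
  have hrow : ∀ i : Fin n, (∑ j, |V⁻¹ i j|) =
      ∏ j ∈ Finset.univ.erase i, (1 + α j) / |α j - α i| := by
    intro i
    rw [hVinv]
    exact lagrange_rowsum α hpos i
  unfold infNorm
  congr 1
  ext r
  constructor
  · rintro ⟨i, rfl⟩; exact ⟨i, hrow i⟩
  · rintro ⟨i, rfl⟩; exact ⟨i, (hrow i).symm⟩
end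

section
/- Let V be an n-by-n Vandermonde matrix generated by distinct real (or complex) numbers alpha_1,...,alpha_n. Then the l-infinity to l-infinity operator norm of V^{-1} is at most max over i of the product over j != i of (1 + |alpha_j|)/|alpha_j - alpha_i|. -/
/-!
Row `i` of `V⁻¹` lists the coefficients of the Lagrange basis polynomial
`ℓᵢ = ∏_{j ≠ i} (X - αⱼ) / (αᵢ - αⱼ)`. Multiplying a polynomial by `X - a` multiplies the
`ℓ¹` norm of its coefficient vector by at most `1 + |a|`, so the coefficients of `ℓᵢ` have
absolute sum at most `∏_{j ≠ i} (1 + |αⱼ|) / |αⱼ - αᵢ|`.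
-/

/-- The `ℓ∞ → ℓ∞` operator norm of a complex matrix: the maximum absolute row sum. -/
noncomputable def infNormC {n : ℕ} (A : Matrix (Fin n) (Fin n) ℂ) : ℝ :=
  sSup {r : ℝ | ∃ i : Fin n, r = ∑ j, ‖A i j‖}

open Polynomial Finset
open scoped Matrix

section CoeffNorm

variable {R : Type*} [SeminormedCommRing R]

theorem Polynomial.sum_range_norm_coeff_X_mul_le (p : R[X]) (N : ℕ) :
    ∑ j ∈ range N, ‖(X * p).coeff j‖ ≤ ∑ j ∈ range N, ‖p.coeff j‖ := by
  cases N with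
  | zero => simp
  | succ N =>
    rw [sum_range_succ']
    simp only [coeff_X_mul, coeff_X_mul_zero, norm_zero, add_zero]
    exact sum_le_sum_of_subset_of_nonneg (range_subset_range.2 N.le_succ)
      fun _ _ _ => norm_nonneg _

theorem Polynomial.sum_range_norm_coeff_X_sub_C_mul_le (a : R) (p : R[X]) (N : ℕ) :
    ∑ j ∈ range N, ‖((X - C a) * p).coeff j‖ ≤ (1 + ‖a‖) * ∑ j ∈ range N, ‖p.coeff j‖ :=
  calc ∑ j ∈ range N, ‖((X - C a) * p).coeff j‖
      ≤ ∑ j ∈ range N, (‖(X * p).coeff j‖ + ‖a‖ * ‖p.coeff j‖) := by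
        gcongr with j
        rw [sub_mul, coeff_sub, coeff_C_mul]
        exact (norm_sub_le _ _).trans (add_le_add le_rfl (norm_mul_le _ _))
    _ ≤ (1 + ‖a‖) * ∑ j ∈ range N, ‖p.coeff j‖ := by
        rw [sum_add_distrib, ← mul_sum, add_mul, one_mul]
        linarith [sum_range_norm_coeff_X_mul_le p N]

variable [NormOneClass R]

theorem Lagrange.sum_range_norm_coeff_nodal_le {ι : Type*} (s : Finset ι) (v : ι → R) (N : ℕ) :
    ∑ j ∈ range N, ‖(nodal s v).coeff j‖ ≤ ∏ i ∈ s, (1 + ‖v i‖) := by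
  classical
  induction s using Finset.induction_on with
  | empty =>
    cases N with
    | zero => simp
    | succ N => simp [sum_range_succ', coeff_one]
  | insert i s hi ih =>
    rw [nodal_insert_eq_nodal hi, prod_insert hi]
    exact (sum_range_norm_coeff_X_sub_C_mul_le _ _ N).trans (by gcongr)

end CoeffNorm

theorem Lagrange.basis_eq_C_nodalWeight_mul_nodal_erase {F ι : Type*} [Field F] [DecidableEq ι]
    (s : Finset ι) (v : ι → F) (i : ι) :
    Lagrange.basis s v i = C (nodalWeight s v i) * nodal (s.erase i) v := by
  simp_rw [Lagrange.basis, basisDivisor, nodalWeight, prod_mul_distrib, map_prod, nodal]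

theorem Lagrange.sum_range_norm_coeff_basis_le {F ι : Type*} [NormedField F] [DecidableEq ι]
    (s : Finset ι) (v : ι → F) (i : ι) (N : ℕ) :
    ∑ j ∈ range N, ‖(Lagrange.basis s v i).coeff j‖ ≤
      ∏ j ∈ s.erase i, (1 + ‖v j‖) / ‖v j - v i‖ := by
  have hweight : ‖nodalWeight s v i‖ = ∏ j ∈ s.erase i, ‖v j - v i‖⁻¹ := by
    simp_rw [nodalWeight, norm_prod, norm_inv, norm_sub_rev]
  calc ∑ j ∈ range N, ‖(Lagrange.basis s v i).coeff j‖
      = ‖nodalWeight s v i‖ * ∑ j ∈ range N, ‖(nodal (s.erase i) v).coeff j‖ := by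
        simp_rw [basis_eq_C_nodalWeight_mul_nodal_erase, coeff_C_mul, norm_mul, mul_sum]
    _ ≤ ‖nodalWeight s v i‖ * ∏ j ∈ s.erase i, (1 + ‖v j‖) := by
        gcongr
        exact sum_range_norm_coeff_nodal_le _ _ _
    _ = ∏ j ∈ s.erase i, (1 + ‖v j‖) / ‖v j - v i‖ := by
        simp_rw [hweight, ← prod_mul_distrib, div_eq_mul_inv, mul_comm]

namespace Matrix

variable {F : Type*} [Field F] {n : ℕ}

noncomputable def lagrangeCoeff (v : Fin n → F) : Matrix (Fin n) (Fin n) F :=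
  of fun i j => (Lagrange.basis univ v i).coeff j

theorem lagrangeCoeff_mul_vandermonde_transpose {v : Fin n → F} (hv : Function.Injective v) :
    lagrangeCoeff v * (vandermonde v)ᵀ = 1 := by
  have hvs : Set.InjOn v (univ : Finset (Fin n)) := hv.injOn
  ext i k
  have hdeg : (Lagrange.basis univ v i).natDegree < n := by
    rw [Lagrange.natDegree_basis hvs (mem_univ i), card_fin]
    exact Nat.sub_lt i.pos one_pos
  calc (lagrangeCoeff v * (vandermonde v)ᵀ) i k
      = ∑ j ∈ range n, (Lagrange.basis univ v i).coeff j * v k ^ j := by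
        rw [mul_apply, ← Fin.sum_univ_eq_sum_range]; rfl
    _ = (Lagrange.basis univ v i).eval (v k) := (eval_eq_sum_range' hdeg _).symm
    _ = (1 : Matrix (Fin n) (Fin n) F) i k := by
        rcases eq_or_ne i k with rfl | hik
        · rw [Lagrange.eval_basis_self hvs (mem_univ i), one_apply_eq]
        · rw [Lagrange.eval_basis_of_ne hik (mem_univ k), one_apply_ne hik]

theorem inv_vandermonde_transpose {v : Fin n → F} (hv : Function.Injective v) :
    (vandermonde v)ᵀ⁻¹ = lagrangeCoeff v :=
  inv_eq_left_inv (lagrangeCoeff_mul_vandermonde_transpose hv)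

theorem sum_norm_lagrangeCoeff_le {K : Type*} [NormedField K] (v : Fin n → K) (i : Fin n) :
    ∑ j, ‖lagrangeCoeff v i j‖ ≤ ∏ j ∈ univ.erase i, (1 + ‖v j‖) / ‖v j - v i‖ :=
  (Fin.sum_univ_eq_sum_range (fun j => ‖(Lagrange.basis univ v i).coeff j‖) n).trans_le
    (Lagrange.sum_range_norm_coeff_basis_le univ v i n)

end Matrix

theorem Real.sSup_setOf_exists_eq_mono {ι : Type*} [Finite ι] {f g : ι → ℝ}
    (h : ∀ i, f i ≤ g i) : sSup {r | ∃ i, r = f i} ≤ sSup {r | ∃ i, r = g i} := by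
  have hrange (u : ι → ℝ) : {r | ∃ i, r = u i} = Set.range u := by
    ext; simp [eq_comm]
  rw [hrange, hrange]
  exact ciSup_mono (Set.finite_range g).bddAbove h

theorem vandermonde_inverse_infNorm_le_general {n : ℕ}
    (α : Fin n → ℂ) (hinj : Function.Injective α)
    (V : Matrix (Fin n) (Fin n) ℂ) (hV : ∀ i j, V i j = α j ^ (i : ℕ)) :
    infNormC V⁻¹ ≤
      sSup {r : ℝ | ∃ i : Fin n,
        r = ∏ j ∈ Finset.univ.erase i, (1 + ‖α j‖) / ‖α j - α i‖} := by
  have hVt : V = (Matrix.vandermonde α)ᵀ := Matrix.ext hV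
  rw [infNormC, hVt, Matrix.inv_vandermonde_transpose hinj]
  exact Real.sSup_setOf_exists_eq_mono (Matrix.sum_norm_lagrangeCoeff_le α)

/-- Gautschi, upper bound: For the `n × n` Vandermonde matrix `V`
generated by distinct (complex) numbers `α_1, …, α_n`, the `ℓ∞ → ℓ∞` operator norm of
`V⁻¹` is at most `max_i ∏_{j ≠ i} (1 + |α_j|)/|α_j - α_i|`. -/
theorem vandermonde_inverse_infNorm_le {n : ℕ} (hn : 0 < n)
    (α : Fin n → ℂ) (hinj : Function.Injective α)
    (V : Matrix (Fin n) (Fin n) ℂ) (hV : ∀ i j, V i j = α j ^ (i : ℕ)) :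
    infNormC V⁻¹ ≤
      sSup {r : ℝ | ∃ i : Fin n,
        r = ∏ j ∈ Finset.univ.erase i, (1 + ‖α j‖) / ‖α j - α i‖} :=
  vandermonde_inverse_infNorm_le_general α hinj V hV
end

section
/- Fix n >= 2 and let m > 2n be an integer, Delta = 1/(m+2n+1), and alpha in (0, 1/2). Then there exist two mixtures of exponentials P1 and P2 on [0, infinity), with at most n+1 components each, all exponents in (0,1] and pairwise separated by at least Delta (with exponents of P1 and P2 interlaced), total non-leading coefficient mass alpha in each, such that the squared Hellinger distance satisfies H^2(P1, P2) <= alpha^2 (4n-2)^2 * (Delta (2n-1))^{4n-4}. -/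
/-!
Put `Δ = 1/(m+2n+1)`, `K = 2n-1` and `A = α/4^(n-1)`. Both mixtures give mass `1-α` to the rate
`Δ`; the rate `(m+1+k)Δ` (`k ≤ K`) gets mass `A·C(K,k)`, in `P₁` for even `k` and in `P₂` for odd
`k`. The even and odd binomial coefficients of an odd row have the same sum, so each family has
mass `α`. In the variable `x = e^{-Δt}` the difference of the two densities is
`AΔ · x · d/dx (x^{m+1} (1-x)^K)`, which vanishes at `x = 1` (that is, `t = 0`) to order `K-1`.
Since `(√f - √g)² ≤ (f-g)²/f` and `f ≥ (1-α)Δx`, the bound `1 - x ≤ Δt` reduces the Hellinger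
distance to the Gamma integrals `∫ t^N e^{-(2m+1)Δt} dt = N!/((2m+1)Δ)^{N+1}` with `N = 2K, 2K-2`.
-/

open MeasureTheory Finset Real Set

lemma sum_range_two_mul {M : Type*} [AddCommMonoid M] (f : ℕ → M) (n : ℕ) :
    ∑ k ∈ range (2 * n), f k = ∑ j ∈ range n, f (2 * j) + ∑ j ∈ range n, f (2 * j + 1) := by
  induction n with
  | zero => simp
  | succ n ih =>
    rw [Nat.mul_succ, sum_range_succ, sum_range_succ, ih, sum_range_succ, sum_range_succ]
    abel

lemma Nat.sum_range_choose_odd_eq_even (p : ℕ) :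
    ∑ j ∈ range (p + 1), (2 * p + 1).choose (2 * j + 1) =
      ∑ j ∈ range (p + 1), (2 * p + 1).choose (2 * j) := by
  rw [← sum_range_reflect]
  refine sum_congr rfl fun j hj => ?_
  rw [Finset.mem_range] at hj
  rw [← Nat.choose_symm (by omega)]
  congr 1
  omega

lemma Nat.sum_range_choose_even (p : ℕ) :
    ∑ j ∈ range (p + 1), (2 * p + 1).choose (2 * j) = 4 ^ p := by
  have h := Nat.sum_range_choose (2 * p + 1)
  rw [show 2 * p + 1 + 1 = 2 * (p + 1) by ring, sum_range_two_mul,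
    Nat.sum_range_choose_odd_eq_even, pow_succ, pow_mul] at h
  norm_num at h
  omega

lemma one_sub_pow_eq_sum {R : Type*} [CommRing R] (y : R) (N : ℕ) :
    (1 - y) ^ N = ∑ k ∈ range (N + 1), (-1) ^ k * N.choose k * y ^ k := by
  rw [sub_eq_neg_add, add_pow]
  refine sum_congr rfl fun k _ => ?_
  rw [neg_pow, one_pow]
  ring

lemma sum_neg_one_pow_mul_choose_mul_mul_pow {R : Type*} [CommRing R] (y : R) (N : ℕ) :
    ∑ k ∈ range (N + 2), (-1) ^ k * (N + 1).choose k * k * y ^ k =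
      -((N + 1) * y * (1 - y) ^ N) := by
  rw [sum_range_succ', one_sub_pow_eq_sum, mul_sum, ← sum_neg_distrib]
  simp only [Nat.cast_zero, mul_zero, zero_mul, add_zero]
  refine sum_congr rfl fun k _ => ?_
  have h : ((N + 1 : ℕ) : R) * N.choose k = (N + 1).choose (k + 1) * (k + 1 : ℕ) := by
    rw [← Nat.cast_mul, ← Nat.cast_mul, Nat.add_one_mul_choose_eq]
  push_cast at h ⊢
  linear_combination (-1) ^ k * y ^ (k + 1) * h

lemma sum_neg_one_pow_mul_choose_mul_add_mul_pow {R : Type*} [CommRing R] (r y : R) (N : ℕ) :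
    ∑ k ∈ range (N + 2), (-1) ^ k * (N + 1).choose k * (r + k) * y ^ k =
      r * (1 - y) ^ (N + 1) - (N + 1) * y * (1 - y) ^ N := by
  have h : ∀ k ∈ range (N + 2), (-1) ^ k * (N + 1).choose k * (r + k) * y ^ k =
      r * ((-1) ^ k * (N + 1).choose k * y ^ k) + (-1) ^ k * (N + 1).choose k * k * y ^ k :=
    fun k _ => by ring
  rw [sum_congr rfl h, sum_add_distrib, ← mul_sum, ← one_sub_pow_eq_sum,
    sum_neg_one_pow_mul_choose_mul_mul_pow]
  ring

lemma sq_sqrt_sub_sqrt_le {f g c : ℝ} (hc : 0 < c) (hcf : c ≤ f) (hg : 0 ≤ g) :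
    (√f - √g) ^ 2 ≤ (f - g) ^ 2 / c := by
  have hf : 0 < f := hc.trans_le hcf
  have key : (f - g) ^ 2 = (√f - √g) ^ 2 * (√f + √g) ^ 2 := by
    rw [← mul_pow, mul_comm, ← sq_sub_sq, sq_sqrt hf.le, sq_sqrt hg]
  rw [le_div_iff₀ hc, key]
  gcongr
  calc c ≤ f := hcf
    _ = √f ^ 2 := (sq_sqrt hf.le).symm
    _ ≤ (√f + √g) ^ 2 := by gcongr; exact le_add_of_nonneg_right (sqrt_nonneg g)

lemma integral_pow_mul_exp_neg_mul_Ioi (N : ℕ) {r : ℝ} (hr : 0 < r) :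
    ∫ t in Ioi (0 : ℝ), t ^ N * exp (-(r * t)) = N.factorial / r ^ (N + 1) := by
  have h := integral_rpow_mul_exp_neg_mul_Ioi (a := N + 1) (by positivity) hr
  simp_rw [add_sub_cancel_right, rpow_natCast] at h
  rw [h, Gamma_nat_eq_factorial, ← Nat.cast_add_one, rpow_natCast, one_div_pow]
  ring

lemma integrableOn_pow_mul_exp_neg_mul_Ioi (N : ℕ) {r : ℝ} (hr : 0 < r) :
    IntegrableOn (fun t => t ^ N * exp (-(r * t))) (Ioi 0) :=
  .of_integral_ne_zero (by rw [integral_pow_mul_exp_neg_mul_Ioi N hr]; positivity)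

lemma sq_mul_pow_sub_mul_pow_le {a b x y z : ℝ} (N : ℕ) (hz : 0 ≤ z) (hzx : z ≤ x)
    (hy₀ : 0 ≤ y) (hy₁ : y ≤ 1) :
    (a * z ^ (N + 1) - b * y * z ^ N) ^ 2 ≤
      2 * (a ^ 2 * x ^ (2 * N + 2) + b ^ 2 * x ^ (2 * N)) := by
  have ha : (a * z ^ (N + 1)) ^ 2 ≤ a ^ 2 * x ^ (2 * N + 2) := by
    rw [mul_pow, ← pow_mul, show (N + 1) * 2 = 2 * N + 2 by ring]
    gcongr
  have hb : (b * y * z ^ N) ^ 2 ≤ b ^ 2 * x ^ (2 * N) := by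
    calc (b * y * z ^ N) ^ 2 = b ^ 2 * (y ^ 2 * z ^ (2 * N)) := by ring
      _ ≤ b ^ 2 * (1 * x ^ (2 * N)) := by gcongr; exact pow_le_one₀ hy₀ hy₁
      _ = b ^ 2 * x ^ (2 * N) := by ring
  nlinarith [sq_nonneg (a * z ^ (N + 1) + b * y * z ^ N)]

lemma le_abs_natCast_mul_sub_natCast_mul {d : ℝ} (hd : 0 ≤ d) {k l : ℕ}
    (h : (k : ℝ) * d ≠ l * d) : d ≤ |k * d - l * d| := by
  have hkl : k ≠ l := by rintro rfl; exact h rfl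
  have h1 : (1 : ℝ) ≤ |(k : ℝ) - l| := by
    exact_mod_cast Int.one_le_abs (sub_ne_zero.mpr (by exact_mod_cast hkl : (k : ℤ) ≠ l))
  rw [← sub_mul, abs_mul, abs_of_nonneg hd]
  nlinarith

lemma Nat.sq_mul_factorial_le_factorial_add_two (p : ℕ) :
    (2 * p + 1) ^ 2 * (4 * p).factorial ≤ (4 * p + 2).factorial := by
  rw [Nat.factorial_succ, Nat.factorial_succ]
  have : (2 * p + 1) ^ 2 ≤ (4 * p + 1 + 1) * (4 * p + 1) := by nlinarith
  calc (2 * p + 1) ^ 2 * (4 * p).factorial ≤ (4 * p + 1 + 1) * (4 * p + 1) * (4 * p).factorial := by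
        gcongr
    _ = _ := by ring

lemma Nat.factorial_four_mul_add_two_le (p : ℕ) :
    (4 * p + 2).factorial ≤ (4 * p + 2) ^ 2 * 16 ^ p * (2 * p + 1) ^ (4 * p) := by
  have h : (4 * p + 2) ^ (4 * p) = 16 ^ p * (2 * p + 1) ^ (4 * p) := by
    rw [show 4 * p + 2 = 2 * (2 * p + 1) by ring, mul_pow, pow_mul]
    norm_num
  calc (4 * p + 2).factorial ≤ (4 * p + 2) ^ (4 * p + 2) := Nat.factorial_le_pow _
    _ = _ := by rw [pow_add, h]; ring

namespace TuranMixture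

/- The construction is indexed by `p = n - 1`, so that `K = 2n - 1 = 2p + 1` and
`m + 2n + 1 = m + 2p + 3` involve no truncated subtraction. -/
variable (m p : ℕ) (α : ℝ)

noncomputable def gap : ℝ := 1 / ((m : ℝ) + 2 * p + 3)

noncomputable def rate (k : ℕ) : ℝ := (m + 1 + k) * gap m p

noncomputable def weight (k : ℕ) : ℝ := α / 4 ^ p * (2 * p + 1).choose k

noncomputable def component (k : ℕ) (t : ℝ) : ℝ :=
  weight p α k * rate m p k * exp (-(rate m p k * t))

noncomputable def density₁ (t : ℝ) : ℝ :=
  (1 - α) * gap m p * exp (-(gap m p * t)) + ∑ j : Fin (p + 1), component m p α (2 * j) t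

noncomputable def density₂ (t : ℝ) : ℝ :=
  (1 - α) * gap m p * exp (-(gap m p * t)) + ∑ j : Fin (p + 1), component m p α (2 * j + 1) t

lemma gap_pos : 0 < gap m p := by unfold gap; positivity

lemma gap_le_one : gap m p ≤ 1 := by
  rw [gap, div_le_one (by positivity)]
  linarith [(Nat.cast_nonneg m : (0 : ℝ) ≤ m), (Nat.cast_nonneg p : (0 : ℝ) ≤ p)]

lemma rate_pos (k : ℕ) : 0 < rate m p k := by unfold rate; have := gap_pos m p; positivity

lemma rate_le_one {k : ℕ} (hk : k ≤ 2 * p + 2) : rate m p k ≤ 1 := by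
  rw [rate, gap, mul_one_div, div_le_one (by positivity)]
  have : (k : ℝ) ≤ 2 * p + 2 := by exact_mod_cast hk
  linarith

lemma rate_strictMono : StrictMono (rate m p) := fun k l hkl => by
  have : (k : ℝ) < l := by exact_mod_cast hkl
  unfold rate
  gcongr
  exact gap_pos m p

lemma gap_lt_rate (hm : 0 < m) (k : ℕ) : gap m p < rate m p k := by
  have : (1 : ℝ) ≤ m := by exact_mod_cast hm
  have := gap_pos m p
  unfold rate
  nlinarith [(Nat.cast_nonneg k : (0 : ℝ) ≤ k)]

lemma weight_nonneg (hα : 0 ≤ α) (k : ℕ) : 0 ≤ weight p α k := by unfold weight; positivity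

lemma component_nonneg (hα : 0 ≤ α) (k : ℕ) (t : ℝ) : 0 ≤ component m p α k t := by
  have := weight_nonneg p α hα k
  have := rate_pos m p k
  unfold component
  positivity

lemma sum_weight_even : ∑ j : Fin (p + 1), weight p α (2 * j) = α := by
  rw [Fin.sum_univ_eq_sum_range (fun j => weight p α (2 * j))]
  simp only [weight, ← mul_sum]
  rw [← Nat.cast_sum, Nat.sum_range_choose_even]
  push_cast
  field_simp

lemma sum_weight_odd : ∑ j : Fin (p + 1), weight p α (2 * j + 1) = α := by
  rw [Fin.sum_univ_eq_sum_range (fun j => weight p α (2 * j + 1))]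
  simp only [weight, ← mul_sum]
  rw [← Nat.cast_sum, Nat.sum_range_choose_odd_eq_even, Nat.sum_range_choose_even]
  push_cast
  field_simp

lemma sum_component_even_sub_odd (t : ℝ) :
    ∑ j : Fin (p + 1), component m p α (2 * j) t -
        ∑ j : Fin (p + 1), component m p α (2 * j + 1) t =
      α / 4 ^ p * gap m p * exp (-((m + 1) * gap m p * t)) *
        ((m + 1) * (1 - exp (-(gap m p * t))) ^ (2 * p + 1) -
          (2 * p + 1) * exp (-(gap m p * t)) * (1 - exp (-(gap m p * t))) ^ (2 * p)) := by
  rw [Fin.sum_univ_eq_sum_range (fun j => component m p α (2 * j) t),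
    Fin.sum_univ_eq_sum_range (fun j => component m p α (2 * j + 1) t)]
  have halt : ∑ j ∈ range (p + 1), component m p α (2 * j) t -
      ∑ j ∈ range (p + 1), component m p α (2 * j + 1) t =
      ∑ k ∈ range (2 * p + 2), (-1) ^ k * component m p α k t := by
    rw [show 2 * p + 2 = 2 * (p + 1) by ring, sum_range_two_mul]
    simp only [(even_two_mul _).neg_one_pow, (odd_two_mul_add_one _).neg_one_pow, one_mul,
      neg_one_mul, sum_neg_distrib, sub_eq_add_neg]
  have hterm : ∀ k ∈ range (2 * p + 2), (-1) ^ k * component m p α k t =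
      α / 4 ^ p * gap m p * exp (-((m + 1) * gap m p * t)) *
        ((-1) ^ k * (2 * p + 1).choose k * ((m + 1 : ℝ) + k) * exp (-(gap m p * t)) ^ k) := by
    intro k _
    rw [← exp_nat_mul, component, weight, rate]
    have : exp (-((m + 1 + k) * gap m p * t)) =
        exp (-((m + 1) * gap m p * t)) * exp (k * -(gap m p * t)) := by
      rw [← exp_add]; ring_nf
    rw [this]
    ring
  rw [halt, sum_congr rfl hterm, ← mul_sum]
  have := sum_neg_one_pow_mul_choose_mul_add_mul_pow ((m + 1 : ℝ)) (exp (-(gap m p * t))) (2 * p)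
  push_cast at this
  rw [this]

lemma sq_sqrt_density_sub_le (hα₀ : 0 ≤ α) (hα₁ : α < 1) {t : ℝ} (ht : 0 ≤ t) :
    (√(density₁ m p α t) - √(density₂ m p α t)) ^ 2 ≤
      2 * (α / 4 ^ p) ^ 2 * gap m p / (1 - α) * exp (-((2 * m + 1) * gap m p * t)) *
        ((m + 1) ^ 2 * (gap m p * t) ^ (4 * p + 2) +
          (2 * p + 1) ^ 2 * (gap m p * t) ^ (4 * p)) := by
  have hΔ := gap_pos m p
  set Δ := gap m p
  set y := exp (-(Δ * t))
  have hy₀ : 0 < y := exp_pos _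
  have hy₁ : y ≤ 1 := exp_le_one_iff.mpr (by nlinarith)
  have hyt : 1 - y ≤ Δ * t := by linarith [one_sub_le_exp_neg (Δ * t)]
  have hα : 0 < 1 - α := sub_pos.mpr hα₁
  have hc : 0 < (1 - α) * Δ * y := by positivity
  have hf : (1 - α) * Δ * y ≤ density₁ m p α t :=
    le_add_of_nonneg_right (sum_nonneg fun j _ => component_nonneg m p α hα₀ _ t)
  have hg : 0 ≤ density₂ m p α t :=
    add_nonneg (by positivity) (sum_nonneg fun j _ => component_nonneg m p α hα₀ _ t)
  have hdiff : density₁ m p α t - density₂ m p α t = α / 4 ^ p * Δ * exp (-((m + 1) * Δ * t)) *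
      ((m + 1) * (1 - y) ^ (2 * p + 1) - (2 * p + 1) * y * (1 - y) ^ (2 * p)) := by
    rw [← sum_component_even_sub_odd, density₁, density₂]
    ring
  have hexp : exp (-((m + 1) * Δ * t)) ^ 2 = exp (-((2 * m + 1) * Δ * t)) * y := by
    rw [sq, ← exp_add, ← exp_add]
    ring_nf
  calc (√(density₁ m p α t) - √(density₂ m p α t)) ^ 2
      ≤ (density₁ m p α t - density₂ m p α t) ^ 2 / ((1 - α) * Δ * y) :=
        sq_sqrt_sub_sqrt_le hc hf hg
    _ = (α / 4 ^ p) ^ 2 * Δ / (1 - α) * exp (-((2 * m + 1) * Δ * t)) *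
          ((m + 1) * (1 - y) ^ (2 * p + 1) - (2 * p + 1) * y * (1 - y) ^ (2 * p)) ^ 2 := by
        rw [hdiff, mul_pow, mul_pow, hexp]
        field_simp
    _ ≤ (α / 4 ^ p) ^ 2 * Δ / (1 - α) * exp (-((2 * m + 1) * Δ * t)) *
          (2 * ((m + 1) ^ 2 * (Δ * t) ^ (2 * (2 * p) + 2) +
            (2 * p + 1) ^ 2 * (Δ * t) ^ (2 * (2 * p)))) := by
        gcongr
        exact sq_mul_pow_sub_mul_pow_le (2 * p) (by linarith) hyt hy₀.le hy₁
    _ = _ := by ring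

lemma hellinger_le_factorial_sum (hα₀ : 0 ≤ α) (hα₁ : α < 1) :
    1 / 2 * ∫ t in Ioi 0, (√(density₁ m p α t) - √(density₂ m p α t)) ^ 2 ≤
      α ^ 2 / (1 - α) / 16 ^ p *
        ((m + 1) ^ 2 * (4 * p + 2).factorial / (2 * m + 1 : ℝ) ^ (4 * p + 3) +
          (2 * p + 1) ^ 2 * (4 * p).factorial / (2 * m + 1 : ℝ) ^ (4 * p + 1)) := by
  have hΔ := gap_pos m p
  set Δ := gap m p
  set ρ := (2 * m + 1) * Δ
  have hρ : 0 < ρ := by positivity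
  set B : ℝ → ℝ := fun t => 2 * (α / 4 ^ p) ^ 2 * Δ / (1 - α) *
    ((m + 1) ^ 2 * Δ ^ (4 * p + 2) * (t ^ (4 * p + 2) * exp (-(ρ * t))) +
      (2 * p + 1) ^ 2 * Δ ^ (4 * p) * (t ^ (4 * p) * exp (-(ρ * t))))
  have hB₁ := (integrableOn_pow_mul_exp_neg_mul_Ioi (4 * p + 2) hρ).const_mul
    (((m : ℝ) + 1) ^ 2 * Δ ^ (4 * p + 2))
  have hB₂ := (integrableOn_pow_mul_exp_neg_mul_Ioi (4 * p) hρ).const_mul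
    ((2 * (p : ℝ) + 1) ^ 2 * Δ ^ (4 * p))
  have hB : IntegrableOn B (Ioi 0) := (hB₁.add hB₂).const_mul _
  have hle : ∀ t ∈ Ioi (0 : ℝ), (√(density₁ m p α t) - √(density₂ m p α t)) ^ 2 ≤ B t :=
    fun t ht => (sq_sqrt_density_sub_le m p α hα₀ hα₁ (le_of_lt ht)).trans_eq (by ring)
  have hα : 0 < 1 - α := sub_pos.mpr hα₁
  calc 1 / 2 * ∫ t in Ioi 0, (√(density₁ m p α t) - √(density₂ m p α t)) ^ 2
      ≤ 1 / 2 * ∫ t in Ioi 0, B t :=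
        mul_le_mul_of_nonneg_left (integral_mono_of_nonneg (.of_forall fun t => sq_nonneg _) hB
          ((ae_restrict_iff' measurableSet_Ioi).mpr (.of_forall hle))) (by norm_num)
    _ = _ := by
        simp only [B]
        rw [integral_const_mul, integral_add hB₁ hB₂, integral_const_mul, integral_const_mul,
          integral_pow_mul_exp_neg_mul_Ioi _ hρ, integral_pow_mul_exp_neg_mul_Ioi _ hρ]
        have h16 : ((4 : ℝ) ^ p) ^ 2 = 16 ^ p := by rw [← pow_mul, mul_comm, pow_mul]; norm_num
        simp only [ρ, mul_pow, div_pow, h16]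
        field_simp
        ring

lemma one_div_two_mul_add_one_le_gap (hm : 2 * p + 2 ≤ m) : 1 / (2 * m + 1 : ℝ) ≤ gap m p := by
  have : (2 * p + 2 : ℝ) ≤ m := by exact_mod_cast hm
  exact one_div_le_one_div_of_le (by positivity) (by linarith)

lemma factorial_sum_le (hm : 2 * p + 2 ≤ m) (hα : α < 1 / 2) :
    α ^ 2 / (1 - α) / 16 ^ p *
        ((m + 1) ^ 2 * (4 * p + 2).factorial / (2 * m + 1 : ℝ) ^ (4 * p + 3) +
          (2 * p + 1) ^ 2 * (4 * p).factorial / (2 * m + 1 : ℝ) ^ (4 * p + 1)) ≤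
      α ^ 2 * (4 * p + 2) ^ 2 * ((2 * p + 1) * gap m p) ^ (4 * p) := by
  have hF₁ : (2 * p + 1 : ℝ) ^ 2 * (4 * p).factorial ≤ (4 * p + 2).factorial := by
    exact_mod_cast Nat.sq_mul_factorial_le_factorial_add_two p
  have hF₂ : ((4 * p + 2).factorial : ℝ) ≤ (4 * p + 2) ^ 2 * 16 ^ p * (2 * p + 1) ^ (4 * p) := by
    exact_mod_cast Nat.factorial_four_mul_add_two_le p
  set Q : ℝ := 2 * m + 1
  set F : ℝ := ((4 * p + 2).factorial : ℝ)
  have hm' : (2 * p + 2 : ℝ) ≤ m := by exact_mod_cast hm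
  have hQ : 4 ≤ Q := by linarith [(Nat.cast_nonneg p : (0 : ℝ) ≤ p)]
  have hmQ : ((m : ℝ) + 1) ^ 2 ≤ Q ^ 2 := by gcongr; linarith
  have hα₁ : 0 < 1 - α := by linarith
  have hα₂ : 2 / (1 - α) ≤ 4 := by rw [div_le_iff₀ hα₁]; linarith
  have hgap := one_div_two_mul_add_one_le_gap m p hm
  calc α ^ 2 / (1 - α) / 16 ^ p * ((m + 1) ^ 2 * F / Q ^ (4 * p + 3) +
          (2 * p + 1) ^ 2 * (4 * p).factorial / Q ^ (4 * p + 1))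
      ≤ α ^ 2 / (1 - α) / 16 ^ p * (F / Q ^ (4 * p + 1) + F / Q ^ (4 * p + 1)) := by
        have h₁ : (m + 1) ^ 2 * F / Q ^ (4 * p + 3) =
            (m + 1) ^ 2 / Q ^ 2 * (F / Q ^ (4 * p + 1)) := by
          field_simp
          ring
        rw [h₁]
        gcongr _ * (?_ + ?_)
        · exact mul_le_of_le_one_left (by positivity) (div_le_one_of_le₀ hmQ (sq_nonneg _))
        · exact div_le_div_of_nonneg_right hF₁ (by positivity)
    _ = 2 / (1 - α) * α ^ 2 * (F / 16 ^ p) / Q ^ (4 * p + 1) := by ring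
    _ ≤ 4 * α ^ 2 * ((4 * p + 2) ^ 2 * (2 * p + 1) ^ (4 * p)) / Q ^ (4 * p + 1) := by
        gcongr
        rwa [div_le_iff₀ (by positivity), mul_right_comm]
    _ = 4 / Q * (α ^ 2 * (4 * p + 2) ^ 2 * ((2 * p + 1) * (1 / Q)) ^ (4 * p)) := by
        rw [mul_one_div, div_pow]
        field_simp
        ring
    _ ≤ 1 * (α ^ 2 * (4 * p + 2) ^ 2 * ((2 * p + 1) * gap m p) ^ (4 * p)) := by
        gcongr
        exact (div_le_one (by positivity)).mpr hQ
    _ = _ := one_mul _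

def exponents : Set ℝ :=
  {gap m p} ∪ Set.range (fun j : Fin (p + 1) => rate m p (2 * j)) ∪
    Set.range (fun j : Fin (p + 1) => rate m p (2 * j + 1))

lemma exponents_subset_range : exponents m p ⊆ Set.range (fun k : ℕ => k * gap m p) := by
  rintro z ((rfl | ⟨j, rfl⟩) | ⟨j, rfl⟩)
  · exact ⟨1, by simp⟩
  · exact ⟨m + 1 + 2 * j, by simp [rate]⟩
  · exact ⟨m + 1 + (2 * j + 1), by simp [rate]⟩

lemma gap_le_abs_sub {x y : ℝ} (hx : x ∈ exponents m p) (hy : y ∈ exponents m p) (hxy : x ≠ y) :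
    gap m p ≤ |x - y| := by
  obtain ⟨k, rfl⟩ := exponents_subset_range m p hx
  obtain ⟨l, rfl⟩ := exponents_subset_range m p hy
  exact le_abs_natCast_mul_sub_natCast_mul (gap_pos m p).le hxy

end TuranMixture

open TuranMixture in
/-- For `n ≥ 2`, `m > 2n`, `Δ = 1/(m+2n+1)` and `α ∈ (0,1/2)`, there exist
two mixtures of exponentials on `[0,∞)` with at most `n+1` components each, all exponents
in `(0,1]`, pairwise separated by at least `Δ` and interlaced, with non-leading coefficient
mass `α` in each, whose squared Hellinger distance is at most
`α² (4n-2)² (Δ(2n-1))^{4n-4}`. -/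
theorem turan_hard_mixtures (n m : ℕ) (hn : 2 ≤ n) (hm : 2 * n < m)
    (α : ℝ) (hα : α ∈ Set.Ioo (0 : ℝ) (1 / 2)) :
    ∃ (ν c0 d0 : ℝ) (a b lam mu : Fin n → ℝ),
      -- normalization: all exponents in (0,1]
      (0 < ν ∧ ν ≤ 1) ∧ (∀ j, 0 < lam j ∧ lam j ≤ 1) ∧ (∀ j, 0 < mu j ∧ mu j ≤ 1) ∧
      -- valid mixture coefficients
      0 ≤ c0 ∧ 0 ≤ d0 ∧ (∀ j, 0 ≤ a j) ∧ (∀ j, 0 ≤ b j) ∧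
      c0 + ∑ j, a j = 1 ∧ d0 + ∑ j, b j = 1 ∧
      -- non-leading coefficient mass α in each
      ∑ j, a j = α ∧ ∑ j, b j = α ∧
      -- exponents interlaced: ν < λ₁ < μ₁ < λ₂ < μ₂ < ⋯ < λ_n < μ_n
      (∀ j, ν < lam j) ∧ (∀ j, lam j < mu j) ∧
      (∀ j k : Fin n, j < k → mu j < lam k) ∧
      -- pairwise separation at least Δ = 1/(m+2n+1)
      (∀ x ∈ {ν} ∪ Set.range lam ∪ Set.range mu,
        ∀ y ∈ {ν} ∪ Set.range lam ∪ Set.range mu,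
          x ≠ y → 1 / ((m : ℝ) + 2 * n + 1) ≤ |x - y|) ∧
      -- squared Hellinger distance between the two mixture densities
      (1 / 2) * (∫ t in Set.Ioi (0 : ℝ),
          (Real.sqrt (c0 * ν * Real.exp (-(ν * t)) +
              ∑ j, a j * lam j * Real.exp (-(lam j * t))) -
           Real.sqrt (d0 * ν * Real.exp (-(ν * t)) +
              ∑ j, b j * mu j * Real.exp (-(mu j * t)))) ^ 2) ≤
        α ^ 2 * (4 * (n : ℝ) - 2) ^ 2 *
          ((1 / ((m : ℝ) + 2 * n + 1)) * (2 * (n : ℝ) - 1)) ^ (4 * n - 4) := by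
  obtain ⟨hα₀, hα₁⟩ := hα
  obtain ⟨p, rfl⟩ : ∃ p, n = p + 1 := ⟨n - 1, by omega⟩
  have hgap : 1 / ((m : ℝ) + 2 * (p + 1 : ℕ) + 1) = gap m p := by rw [gap]; push_cast; ring
  have hbound : α ^ 2 * (4 * ((p + 1 : ℕ) : ℝ) - 2) ^ 2 *
      (gap m p * (2 * (p + 1 : ℕ) - 1)) ^ (4 * (p + 1) - 4) =
        α ^ 2 * (4 * p + 2) ^ 2 * ((2 * p + 1) * gap m p) ^ (4 * p) := by
    rw [show 4 * (p + 1) - 4 = 4 * p by omega]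
    push_cast
    ring
  rw [hgap, hbound]
  refine ⟨gap m p, 1 - α, 1 - α, fun j => weight p α (2 * j), fun j => weight p α (2 * j + 1),
    fun j => rate m p (2 * j), fun j => rate m p (2 * j + 1), ⟨gap_pos m p, gap_le_one m p⟩,
    fun j => ⟨rate_pos m p _, rate_le_one m p (by omega)⟩,
    fun j => ⟨rate_pos m p _, rate_le_one m p (by omega)⟩, by linarith, by linarith,
    fun j => weight_nonneg p α hα₀.le _, fun j => weight_nonneg p α hα₀.le _,
    by rw [sum_weight_even]; ring, by rw [sum_weight_odd]; ring, sum_weight_even p α,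
    sum_weight_odd p α, fun j => gap_lt_rate m p (by omega) _,
    fun j => rate_strictMono m p (by omega),
    fun j k hjk => rate_strictMono m p (by omega),
    fun x hx y hy => gap_le_abs_sub m p hx hy, ?_⟩
  exact (hellinger_le_factorial_sum m p α hα₀.le (by linarith)).trans
    (factorial_sum_le m p α (by omega) hα₁)
end

section
/- Let p(t) = sum_{j=1}^n c_j e^{-lambda_j t} with real coefficients c_j and real exponents lambda_1 > ... > lambda_n, and suppose |lambda_1| <= L. Then for any t_1, t_2 > 0: max over t in [-t_2, t_1] of |p(t)| <= e^{(t_1+t_2) L} * (4e (t_1+t_2)/t_1)^{n-1} * max over t in [0, t_1] of |p(t)|. (Nazarov-Turan lemma, specialized to real exponents and intervals.) -/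
/-!
With a step `h = t₁ / n` and `yⱼ = exp ((λ₁ - λⱼ) h) ≥ 1`, the values `e^{λ₁ ν h} p(τ + ν h)`
form a generalized power sum `F ν = ∑ bⱼ yⱼ ^ ν`. Its value at `ν = 0` is controlled by the `n`
values `F m, …, F (m + n - 1)`: the sum `F (ν + 1) / y₁ - F ν` has one term fewer, and a double
induction on the number of terms and on `m` yields the factor `2 ^ (n - 1) * C(m + n - 1, n - 1)`
through Pascal's rule. Taking `m` least with `τ + m h ≥ 0` puts all nodes in `[0, t₁]`, and
`C(N, k) ≤ (e N / k) ^ k` turns the factor into `(4 e (t₁ + t₂) / t₁) ^ (n - 1)`.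
-/

open Real Finset

section PowerSum

variable {𝕜 : Type*} [NormedField 𝕜] {n : ℕ}

def powerSum (b y : Fin n → 𝕜) (ν : ℕ) : 𝕜 :=
  ∑ j, b j * y j ^ ν

theorem powerSum_succ (b y : Fin n → 𝕜) (ν : ℕ) :
    powerSum b y (ν + 1) = powerSum (fun j => b j * y j) y ν := by
  simp only [powerSum, pow_succ', mul_assoc]

theorem powerSum_tail (b y : Fin (n + 1) → 𝕜) (hy : y 0 ≠ 0) (ν : ℕ) :
    powerSum (fun j => b j.succ * (y j.succ / y 0 - 1)) (fun j => y j.succ) ν =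
      powerSum b y (ν + 1) / y 0 - powerSum b y ν := by
  have head : b 0 * y 0 ^ (ν + 1) / y 0 = b 0 * y 0 ^ ν := by
    rw [pow_succ]; field_simp
  simp only [powerSum, Fin.sum_univ_succ, add_div, head, add_sub_add_left_eq_sub, sum_div,
    ← sum_sub_distrib]
  refine sum_congr rfl fun j _ => ?_
  rw [pow_succ]; field_simp

theorem norm_div_sub_le {a c d : 𝕜} (hc : 1 ≤ ‖c‖) : ‖a / c - d‖ ≤ ‖a‖ + ‖d‖ :=
  (norm_sub_le _ _).trans <| by
    rw [norm_div]; gcongr; exact div_le_self (norm_nonneg a) hc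

theorem norm_powerSum_zero_le (n m : ℕ) (b y : Fin (n + 1) → 𝕜) (hy : ∀ j, 1 ≤ ‖y j‖) {M : ℝ}
    (hM : ∀ l ≤ n, ‖powerSum b y (m + l)‖ ≤ M) :
    ‖powerSum b y 0‖ ≤ 2 ^ n * (m + n).choose n * M := by
  induction n generalizing m M with
  | zero =>
    have single (ν : ℕ) : powerSum b y ν = b 0 * y 0 ^ ν := Fin.sum_univ_one _
    have hm := hM 0 le_rfl
    rw [single, add_zero, norm_mul, norm_pow] at hm
    rw [single, pow_zero, mul_one, pow_zero, add_zero, Nat.choose_zero_right, Nat.cast_one,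
      one_mul, one_mul]
    exact (le_mul_of_one_le_right (norm_nonneg _) (one_le_pow₀ (hy 0))).trans hm
  | succ n ihn =>
    induction m generalizing b M with
    | zero =>
      have hM0 := hM 0 (Nat.zero_le _)
      simp only [zero_add, Nat.choose_self, Nat.cast_one, mul_one] at hM0 ⊢
      exact hM0.trans (le_mul_of_one_le_left ((norm_nonneg _).trans hM0) (one_le_pow₀ one_le_two))
    | succ m ihm =>
      have hy0 : y 0 ≠ 0 := norm_pos_iff.mp (one_pos.trans_le (hy 0))
      have shifted : ‖powerSum b y 1‖ ≤ 2 ^ (n + 1) * (m + (n + 1)).choose (n + 1) * M := by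
        rw [powerSum_succ]
        refine ihm _ fun l hl => ?_
        rw [← powerSum_succ, ← add_right_comm m 1 l]
        exact hM l hl
      have tail : ‖powerSum (fun j => b j.succ * (y j.succ / y 0 - 1)) (fun j => y j.succ) 0‖ ≤
          2 ^ n * (m + 1 + n).choose n * (2 * M) := by
        refine ihn (m + 1) _ _ (fun j => hy j.succ) fun l hl => ?_
        rw [powerSum_tail b y hy0, two_mul]
        exact (norm_div_sub_le (hy 0)).trans
          (add_le_add (hM (l + 1) (by omega)) (hM l (by omega)))
      calc ‖powerSum b y 0‖
          = ‖powerSum b y 1 / y 0 -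
              powerSum (fun j => b j.succ * (y j.succ / y 0 - 1)) (fun j => y j.succ) 0‖ := by
            rw [powerSum_tail b y hy0, sub_sub_cancel]
        _ ≤ ‖powerSum b y 1‖ +
              ‖powerSum (fun j => b j.succ * (y j.succ / y 0 - 1)) (fun j => y j.succ) 0‖ :=
            norm_div_sub_le (hy 0)
        _ ≤ 2 ^ (n + 1) * (m + (n + 1)).choose (n + 1) * M +
              2 ^ n * (m + 1 + n).choose n * (2 * M) := add_le_add shifted tail
        _ = 2 ^ (n + 1) * (m + 1 + (n + 1)).choose (n + 1) * M := by
            rw [show m + 1 + (n + 1) = m + (n + 1) + 1 by ring, Nat.choose_succ_succ',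
              show m + 1 + n = m + (n + 1) by ring]
            push_cast; ring

end PowerSum

theorem Nat.choose_le_exp_one_mul_div_pow (N k : ℕ) :
    (N.choose k : ℝ) ≤ (exp 1 * N / k) ^ k := by
  rcases Nat.eq_zero_or_pos k with rfl | hk
  · simp
  have hk' : (0 : ℝ) < k := by exact_mod_cast hk
  calc (N.choose k : ℝ) ≤ N ^ k / k.factorial := Nat.choose_le_pow_div k N
    _ = (N / k) ^ k * (k ^ k / k.factorial) := by
        field_simp; rw [← mul_pow, div_mul_cancel₀ _ hk'.ne']
    _ ≤ (N / k) ^ k * exp k := by gcongr; exact pow_div_factorial_le_exp _ hk'.le k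
    _ = (exp 1 * N / k) ^ k := by rw [← exp_one_pow]; ring

theorem two_pow_mul_choose_le {m k : ℕ} {T : ℝ} (h : (m + k : ℝ) ≤ (k + 1) * T) :
    2 ^ k * ((m + k).choose k : ℝ) ≤ (4 * exp 1 * T) ^ k := by
  rcases Nat.eq_zero_or_pos k with rfl | hk
  · simp
  have hk' : (1 : ℝ) ≤ k := by exact_mod_cast hk
  have hmk : (m + k : ℝ) / k ≤ 2 * T := by
    rw [div_le_iff₀ (by positivity)]
    nlinarith [(m.cast_nonneg : (0 : ℝ) ≤ m)]
  calc 2 ^ k * ((m + k).choose k : ℝ) ≤ 2 ^ k * (exp 1 * (m + k : ℕ) / k) ^ k := by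
        gcongr; exact Nat.choose_le_exp_one_mul_div_pow _ _
    _ = (2 * exp 1 * ((m + k : ℝ) / k)) ^ k := by rw [← mul_pow]; push_cast; ring
    _ ≤ (4 * exp 1 * T) ^ k := by
        gcongr (?_ : ℝ) ^ k
        calc 2 * exp 1 * ((m + k : ℝ) / k) ≤ 2 * exp 1 * (2 * T) := by gcongr
          _ = 4 * exp 1 * T := by ring

theorem powerSum_exp_eq {n : ℕ} (c lam : Fin n → ℝ) (a τ h : ℝ) (ν : ℕ) :
    powerSum (fun j => c j * exp (-(lam j * τ))) (fun j => exp ((a - lam j) * h)) ν =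
      exp (a * (ν * h)) * ∑ j, c j * exp (-(lam j * (τ + ν * h))) := by
  simp only [powerSum, mul_sum, ← exp_nat_mul]
  refine sum_congr rfl fun j _ => ?_
  rw [mul_assoc, ← exp_add, mul_left_comm (exp _), ← exp_add]
  ring_nf

theorem abs_le_of_grid {k : ℕ} (c lam : Fin (k + 1) → ℝ) (hlam : ∀ j, lam j ≤ lam 0)
    (p : ℝ → ℝ) (hp : ∀ t, p t = ∑ j, c j * exp (-(lam j * t))) {h : ℝ} (hh : 0 ≤ h) (τ : ℝ)
    (m : ℕ) {M : ℝ} (hM : ∀ l ≤ k, |p (τ + (m + l) * h)| * exp (lam 0 * ((m + l) * h)) ≤ M) :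
    |p τ| ≤ 2 ^ k * (m + k).choose k * M := by
  have hy (j : Fin (k + 1)) : 1 ≤ ‖exp ((lam 0 - lam j) * h)‖ := by
    rw [norm_of_nonneg (exp_pos _).le]
    exact one_le_exp (mul_nonneg (sub_nonneg.mpr (hlam j)) hh)
  have := norm_powerSum_zero_le k m (fun j => c j * exp (-(lam j * τ))) _ hy fun l hl => by
    rw [powerSum_exp_eq, norm_mul, norm_of_nonneg (exp_pos _).le, mul_comm, ← hp]
    push_cast
    exact hM l hl
  simpa [powerSum_exp_eq, ← hp] using this

theorem exists_grid_mem_Icc (k : ℕ) {t1 t2 τ : ℝ} (ht1 : 0 < t1) (ht2 : 0 ≤ t2)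
    (hτ : τ ∈ Set.Icc (-t2) t1) :
    ∃ (m : ℕ) (h : ℝ), 0 ≤ h ∧ (∀ l ≤ k, τ + (m + l) * h ∈ Set.Icc 0 t1) ∧
      (m + k : ℝ) ≤ (k + 1) * ((t1 + t2) / t1) := by
  have hT : (k : ℝ) ≤ (k + 1) * ((t1 + t2) / t1) := by
    rw [mul_div_assoc', le_div_iff₀ ht1]; nlinarith
  rcases le_or_gt 0 τ with hτ0 | hτ0
  · exact ⟨0, 0, le_rfl, fun l _ => by simpa using ⟨hτ0, hτ.2⟩, by simpa using hT⟩
  set h := t1 / (k + 1)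
  have hh : 0 < h := by positivity
  set m := ⌈-τ / h⌉₊
  have hm_ge : -τ ≤ m * h := (div_le_iff₀ hh).mp (Nat.le_ceil _)
  have hm_lt : m * h < -τ + h := by
    have := Nat.ceil_lt_add_one (div_pos (neg_pos.mpr hτ0) hh).le
    rwa [← lt_div_iff₀ hh, add_div, div_self hh.ne']
  have hkh : (k + 1) * h = t1 := mul_div_cancel₀ t1 (by positivity)
  refine ⟨m, h, hh.le, fun l hl => ⟨by nlinarith, ?_⟩, ?_⟩
  · have : (l : ℝ) * h ≤ k * h := by gcongr
    linarith
  · rw [← hkh, mul_div_assoc', mul_div_mul_left _ _ (by positivity), le_div_iff₀ hh]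
    linarith [hτ.1]

/-- Nazarov–Turán, real exponents, intervals: Let
`p(t) = ∑_{j=1}^n c_j e^{-λ_j t}` with real coefficients and strictly decreasing real
exponents `λ_1 > ⋯ > λ_n`, and suppose `|λ_1| ≤ L`. Then for all `t_1, t_2 > 0` and every
`t ∈ [-t_2, t_1]`,
`|p(t)| ≤ e^{(t_1+t_2)L} (4e(t_1+t_2)/t_1)^{n-1} · sup_{s ∈ [0,t_1]} |p(s)|`. -/
theorem nazarov_turan {n : ℕ} (hn : 0 < n)
    (c lam : Fin n → ℝ) (hanti : StrictAnti lam) (L : ℝ) (hL : |lam ⟨0, hn⟩| ≤ L)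
    (t1 t2 : ℝ) (ht1 : 0 < t1) (ht2 : 0 < t2)
    (p : ℝ → ℝ) (hp : ∀ t, p t = ∑ j, c j * Real.exp (-(lam j * t))) :
    ∀ t ∈ Set.Icc (-t2) t1,
      |p t| ≤ Real.exp ((t1 + t2) * L) * (4 * Real.exp 1 * (t1 + t2) / t1) ^ (n - 1) *
        sSup ((fun s => |p s|) '' Set.Icc 0 t1) := by
  intro τ hτ
  obtain ⟨k, rfl⟩ := Nat.exists_eq_add_one_of_ne_zero hn.ne'
  rw [Nat.add_sub_cancel]
  set S := sSup ((fun s => |p s|) '' Set.Icc 0 t1)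
  have hS (s : ℝ) (hs : s ∈ Set.Icc 0 t1) : |p s| ≤ S := by
    refine le_csSup (isCompact_Icc.bddAbove_image ?_) ⟨s, hs, rfl⟩
    rw [show p = _ from funext hp]
    fun_prop
  have hS0 : 0 ≤ S := (abs_nonneg _).trans (hS 0 ⟨le_rfl, ht1.le⟩)
  have hlam0 : lam 0 ≤ L := (le_abs_self _).trans hL
  have hL0 : 0 ≤ L := (abs_nonneg _).trans hL
  obtain ⟨m, h, hh, hgrid, hmk⟩ := exists_grid_mem_Icc k ht1 ht2.le hτ
  have hexp (l : ℕ) (hl : l ≤ k) : exp (lam 0 * ((m + l) * h)) ≤ exp ((t1 + t2) * L) := by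
    have hlen : ((m : ℝ) + l) * h ≤ t1 + t2 := by linarith [hτ.1, (hgrid l hl).2]
    rw [exp_le_exp, mul_comm _ L]
    exact mul_le_mul hlam0 hlen (by positivity) hL0
  calc |p τ| ≤ 2 ^ k * (m + k).choose k * (S * exp ((t1 + t2) * L)) :=
        abs_le_of_grid c lam (fun j => hanti.antitone (Fin.zero_le j)) p hp hh τ m fun l hl =>
          mul_le_mul (hS _ (hgrid l hl)) (hexp l hl) (exp_pos _).le hS0
    _ ≤ (4 * exp 1 * ((t1 + t2) / t1)) ^ k * (S * exp ((t1 + t2) * L)) := by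
        gcongr; exact two_pow_mul_choose_le hmk
    _ = _ := by ring
end
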